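/- arXiv:1302.0098 — 5 statements merged into one kernel-verified Lean document; each statement's English description precedes it below -/
import Mathlib

section
/- The function f(θ) = C / [(1+ρ₁² − 2ρ₁cos(θ−μ₁))(1+ρ₂² − 2ρ₂cos(θ−μ₂))] integrates to 1 over [−π, π), where C = (1−ρ₁²)(1−ρ₂²)(1+ρ₁²ρ₂² − 2ρ₁ρ₂cos(μ₁−μ₂)) / (2π(1−ρ₁²ρ₂²)). -/
/-!
Put `a = ρ₁ e^{iμ₁}` and `b = ρ₂ e^{iμ₂}`. Then `(1 - ρ²) / (1 + ρ² - 2ρ cos (θ - μ))` is the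
Poisson kernel `P_a(e^{iθ})` of the unit disc, so the density is a constant multiple of
`P_a P_b` on the unit circle. There `P_b(z) = Re ((1 + b̄z) / (1 - b̄z))`, a harmonic function on a
neighbourhood of the closed disc, and the Poisson integral formula gives the semigroup identity
`⨍ P_a P_b = P_{b̄a}(1) = (1 - ρ₁²ρ₂²) / (1 + ρ₁²ρ₂² - 2ρ₁ρ₂ cos (μ₁ - μ₂))`, which is the
reciprocal of `2π C / ((1 - ρ₁²)(1 - ρ₂²))`.
-/

open Real intervalIntegral

noncomputable def ewcC (μ₁ μ₂ ρ₁ ρ₂ : ℝ) : ℝ :=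
  (1 - ρ₁ ^ 2) * (1 - ρ₂ ^ 2) * (1 + ρ₁ ^ 2 * ρ₂ ^ 2 - 2 * ρ₁ * ρ₂ * Real.cos (μ₁ - μ₂)) /
    (2 * Real.pi * (1 - ρ₁ ^ 2 * ρ₂ ^ 2))

open Complex ComplexConjugate Metric

lemma integral_circleMap_neg_pi_pi {E : Type*} [NormedAddCommGroup E] [NormedSpace ℝ E]
    (f : ℂ → E) (c : ℂ) (R : ℝ) :
    ∫ θ in -π..π, f (circleMap c R θ) = (2 * π) • Real.circleAverage f c R := by
  rw [Real.circleAverage_eq_integral_add (-π), smul_inv_smul₀ (by positivity),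
    intervalIntegral.integral_comp_add_right (fun θ ↦ f (circleMap c R θ))]
  ring_nf

lemma poissonKernel_pos {c w z : ℂ} (h : ‖w - c‖ < ‖z - c‖) : 0 < poissonKernel c w z := by
  have hzw : z - c - (w - c) ≠ 0 := fun h' ↦ by rw [sub_eq_zero.1 h'] at h; exact h.false
  rw [poissonKernel_def]
  exact div_pos (sub_pos.2 (by gcongr)) (by positivity)

lemma poissonKernel_zero_circleMap (ρ μ θ : ℝ) :
    poissonKernel 0 (ρ * exp (μ * I)) (circleMap 0 1 θ) =
      (1 - ρ ^ 2) / (1 + ρ ^ 2 - 2 * ρ * Real.cos (θ - μ)) := by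
  rw [poissonKernel_def]
  simp only [sub_zero, norm_circleMap_zero, abs_one, one_pow, norm_mul, norm_real,
    norm_exp_ofReal_mul_I, mul_one, Real.norm_eq_abs, sq_abs]
  congr 1
  rw [← Complex.normSq_eq_norm_sq, Complex.normSq_apply]
  simp [circleMap, exp_ofReal_mul_I_re, exp_ofReal_mul_I_im, Real.cos_sub]
  linear_combination Real.sin_sq_add_cos_sq θ + ρ ^ 2 * Real.sin_sq_add_cos_sq μ

lemma poissonKernel_zero_conj_mul_one (ρ₁ ρ₂ μ₁ μ₂ : ℝ) :
    poissonKernel 0 (conj (ρ₂ * exp (μ₂ * I)) * (ρ₁ * exp (μ₁ * I))) 1 =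
      (1 - (ρ₁ * ρ₂) ^ 2) / (1 + (ρ₁ * ρ₂) ^ 2 - 2 * (ρ₁ * ρ₂) * Real.cos (μ₁ - μ₂)) := by
  have h : conj (ρ₂ * exp (μ₂ * I)) * (ρ₁ * exp (μ₁ * I)) = ↑(ρ₁ * ρ₂) * exp (↑(μ₁ - μ₂) * I) := by
    simp only [map_mul, conj_ofReal, ← exp_conj, conj_I]
    rw [mul_mul_mul_comm, ← Complex.exp_add]
    push_cast
    ring_nf
  rw [h, show (1 : ℂ) = circleMap 0 1 0 by simp [circleMap], poissonKernel_zero_circleMap,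
    zero_sub, Real.cos_neg]

lemma norm_conj_mul_lt_one {b z : ℂ} (hb : b ∈ ball (0 : ℂ) 1) (hz : z ∈ closedBall (0 : ℂ) 1) :
    ‖conj b * z‖ < 1 := by
  rw [mem_ball_zero_iff] at hb
  rw [mem_closedBall_zero_iff] at hz
  rw [norm_mul, Complex.norm_conj]
  exact mul_lt_one_of_nonneg_of_lt_one_left (norm_nonneg b) hb hz

lemma poissonKernel_zero_eq_poissonKernel_conj_mul_one {b z : ℂ} (hz : ‖z‖ = 1) :
    poissonKernel 0 b z = poissonKernel 0 (conj b * z) 1 := by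
  have hzz : conj z * z = 1 := by
    rw [conj_mul', hz]; simp
  have h : 1 - conj b * z = z * conj (z - b) := by
    rw [map_sub]; linear_combination -hzz
  simp only [poissonKernel_def, sub_zero, h, norm_mul, Complex.norm_conj, hz, one_mul, norm_one,
    mul_one]

lemma harmonicOnNhd_poissonKernel_conj_mul_one {b : ℂ} (hb : b ∈ ball (0 : ℂ) 1) :
    InnerProductSpace.HarmonicOnNhd (fun z ↦ poissonKernel 0 (conj b * z) 1)
      (closedBall 0 1) := by
  intro z hz
  have hbz : 1 - conj b * z ≠ 0 := sub_ne_zero.2 fun h ↦ by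
    simpa [← h] using norm_conj_mul_lt_one hb hz
  simp only [poissonKernel_eq_re_herglotzRieszKernel, Function.comp_def, herglotzRieszKernel_def,
    sub_zero]
  apply AnalyticAt.harmonicAt_re
  fun_prop (disch := assumption)

lemma circleAverage_poissonKernel_mul_poissonKernel {a b : ℂ} (ha : a ∈ ball (0 : ℂ) 1)
    (hb : b ∈ ball (0 : ℂ) 1) :
    Real.circleAverage (fun z ↦ poissonKernel 0 a z * poissonKernel 0 b z) 0 1 =
      poissonKernel 0 (conj b * a) 1 := by
  rw [← (harmonicOnNhd_poissonKernel_conj_mul_one hb).circleAverage_poissonKernel_smul ha]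
  refine Real.circleAverage_congr_sphere fun z hz ↦ ?_
  rw [abs_one, mem_sphere_zero_iff_norm] at hz
  simp [poissonKernel_zero_eq_poissonKernel_conj_mul_one hz]

theorem ewc_integral_eq_one_general (μ₁ μ₂ ρ₁ ρ₂ : ℝ)
    (hρ₁ : ρ₁ ∈ Set.Ico (0 : ℝ) 1) (hρ₂ : ρ₂ ∈ Set.Ico (0 : ℝ) 1) :
    ∫ θ in (-Real.pi)..Real.pi,
      ewcC μ₁ μ₂ ρ₁ ρ₂ *
        ((1 + ρ₁ ^ 2 - 2 * ρ₁ * Real.cos (θ - μ₁)) *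
          (1 + ρ₂ ^ 2 - 2 * ρ₂ * Real.cos (θ - μ₂)))⁻¹ = 1 := by
  set a : ℂ := ρ₁ * exp (μ₁ * I)
  set b : ℂ := ρ₂ * exp (μ₂ * I)
  have ha : a ∈ ball 0 1 := by simpa [a, abs_of_nonneg hρ₁.1] using hρ₁.2
  have hb : b ∈ ball 0 1 := by simpa [b, abs_of_nonneg hρ₂.1] using hρ₂.2
  have hP₀ : 0 < poissonKernel 0 (conj b * a) 1 :=
    poissonKernel_pos (by simpa using norm_conj_mul_lt_one hb (ball_subset_closedBall ha))
  have hdensity : ∀ θ : ℝ, ewcC μ₁ μ₂ ρ₁ ρ₂ *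
      ((1 + ρ₁ ^ 2 - 2 * ρ₁ * Real.cos (θ - μ₁)) * (1 + ρ₂ ^ 2 - 2 * ρ₂ * Real.cos (θ - μ₂)))⁻¹ =
      (2 * π * poissonKernel 0 (conj b * a) 1)⁻¹ *
        (poissonKernel 0 a (circleMap 0 1 θ) * poissonKernel 0 b (circleMap 0 1 θ)) := by
    intro θ
    rw [poissonKernel_zero_circleMap, poissonKernel_zero_circleMap,
      poissonKernel_zero_conj_mul_one, ewcC]
    simp only [mul_inv, div_eq_mul_inv, inv_inv]
    ring
  simp_rw [hdensity]
  rw [intervalIntegral.integral_const_mul,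
    integral_circleMap_neg_pi_pi (fun z ↦ poissonKernel 0 a z * poissonKernel 0 b z),
    circleAverage_poissonKernel_mul_poissonKernel ha hb, smul_eq_mul]
  exact inv_mul_cancel₀ (mul_pos two_pi_pos hP₀).ne'

/-- The EWC density integrates to 1 over `[-π, π)`. -/
theorem ewc_integral_eq_one (μ₁ μ₂ ρ₁ ρ₂ : ℝ)
    (hμ₁ : μ₁ ∈ Set.Ico (-Real.pi) Real.pi) (hμ₂ : μ₂ ∈ Set.Ico (-Real.pi) Real.pi)
    (hρ₁ : ρ₁ ∈ Set.Ico (0 : ℝ) 1) (hρ₂ : ρ₂ ∈ Set.Ico (0 : ℝ) 1) :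
    ∫ θ in (-Real.pi)..Real.pi,
      ewcC μ₁ μ₂ ρ₁ ρ₂ *
        ((1 + ρ₁ ^ 2 - 2 * ρ₁ * Real.cos (θ - μ₁)) *
          (1 + ρ₂ ^ 2 - 2 * ρ₂ * Real.cos (θ - μ₂)))⁻¹ = 1 :=
  ewc_integral_eq_one_general μ₁ μ₂ ρ₁ ρ₂ hρ₁ hρ₂
end

section
/- For any n ∈ ℕ and φ ∈ D with φ ≠ 0 (or generally φ₁ = φ₂ = φ), the nth trigonometric moment of a random variable Z on the unit circle with density f(z) = (1/2π)·((1+|φ|²)⁻¹·(1−|φ|²))·((1−|φ|²)/|z−φ|²)² satisfies E(Zⁿ) = [(1+n+(1−n)|φ|²)/(1+|φ|²)]·φⁿ. -/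
/-!
On the unit circle `dθ = dz / (i z)` and `|z - φ|² = (z - φ)(1 - φ̄ z) / z`, so the moment is
`(c / i) ∮_{|z|=1} f z / (z - φ)² dz` with `c = (1 - |φ|²)³ / (2π (1 + |φ|²))` and
`f z = z ^ (n + 1) / (1 - φ̄ z)²`, which is holomorphic near the closed unit disc because `|φ| < 1`.
Cauchy's formula for the derivative turns this into `2π c f'(φ)`, and
`f'(φ) = φⁿ ((n + 1) + (1 - n) |φ|²) / (1 - |φ|²)³`.
-/

open Real Complex intervalIntegral Metric Set ComplexConjugate

theorem integral_neg_pi_pi_comp_exp_mul_I {E : Type*} [NormedAddCommGroup E] [NormedSpace ℂ E]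
    (g : ℂ → E) :
    ∫ θ in (-π)..π, g (exp (θ * I)) = I⁻¹ • ∮ z in C(0, 1), z⁻¹ • g z := by
  have hper : Function.Periodic (fun θ : ℝ => g (circleMap 0 1 θ)) (2 * π) := fun θ => by
    simp only [periodic_circleMap 0 1 θ]
  calc ∫ θ in (-π)..π, g (exp (θ * I))
      = ∫ θ in 0..2 * π, g (circleMap 0 1 θ) := by
        simpa [circleMap_zero, show -π + 2 * π = π by ring] using
          (hper.intervalIntegral_add_eq (-π) 0)
    _ = ((2 * π : ℝ) : ℂ) • circleAverage g 0 1 := by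
        rw [circleAverage_def, coe_smul, smul_smul,
          mul_inv_cancel₀ (by positivity), one_smul]
    _ = I⁻¹ • ∮ z in C(0, 1), z⁻¹ • g z := by
        rw [circleAverage_eq_circleIntegral one_ne_zero, smul_smul]
        simp only [sub_zero]
        congr 1
        push_cast
        field_simp [pi_ne_zero]

theorem conj_mul_ne_one {φ z : ℂ} (hφ : ‖φ‖ < 1) (hz : ‖z‖ ≤ 1) : conj φ * z ≠ 1 := by
  intro h
  have : ‖conj φ * z‖ < 1 := by
    rw [norm_mul, RCLike.norm_conj]
    nlinarith [norm_nonneg φ, norm_nonneg z]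
  simp [h] at this

theorem ofReal_norm_sub_sq_of_norm_eq_one {φ z : ℂ} (hz : ‖z‖ = 1) :
    ((‖z - φ‖ ^ 2 : ℝ) : ℂ) = (z - φ) * (1 - conj φ * z) / z := by
  have hz0 : z ≠ 0 := norm_ne_zero_iff.mp (by simp [hz])
  rw [ofReal_pow, ← mul_conj', map_sub, ← inv_eq_conj hz]
  field_simp

theorem inv_mul_pow_mul_div_norm_sub_pow_four {φ z : ℂ} (n : ℕ) (c : ℝ) (hz : ‖z‖ = 1)
    (hzφ : z ≠ φ) :
    z⁻¹ * (z ^ n * ((c / ‖z - φ‖ ^ 4 : ℝ) : ℂ))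
      = c * (((z - φ) ^ 2)⁻¹ * (z ^ (n + 1) / (1 - conj φ * z) ^ 2)) := by
  have hz0 : z ≠ 0 := norm_ne_zero_iff.mp (by simp [hz])
  have hsq := ofReal_norm_sub_sq_of_norm_eq_one (φ := φ) hz
  have hsq0 : ((‖z - φ‖ ^ 2 : ℝ) : ℂ) ≠ 0 := by
    simpa [sub_eq_zero] using hzφ
  have hpole : 1 - conj φ * z ≠ 0 := fun h => hsq0 (by simp [hsq, h])
  rw [show ‖z - φ‖ ^ 4 = (‖z - φ‖ ^ 2) ^ 2 by ring, ofReal_div, ofReal_pow _ 2, hsq]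
  field_simp [sub_ne_zero.mpr hzφ]
  ring

theorem deriv_pow_succ_div_one_sub_mul_sq {a w : ℂ} (n : ℕ) (hw : a * w ≠ 1) :
    deriv (fun z => z ^ (n + 1) / (1 - a * z) ^ 2) w
      = w ^ n * ((n + 1) + (1 - n) * (a * w)) / (1 - a * w) ^ 3 := by
  have hw' : 1 - a * w ≠ 0 := sub_ne_zero.mpr hw.symm
  have hnum : HasDerivAt (fun z : ℂ => z ^ (n + 1)) ((n + 1 : ℕ) * w ^ n) w := hasDerivAt_pow _ w
  have hden : HasDerivAt (fun z : ℂ => (1 - a * z) ^ 2) (2 * (1 - a * w) ^ 1 * (0 - a * 1)) w :=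
    ((hasDerivAt_const w 1).sub ((hasDerivAt_id w).const_mul a)).pow 2
  rw [(hnum.fun_div hden (pow_ne_zero 2 hw')).deriv]
  field_simp
  push_cast
  ring

theorem ewc_trig_moment_equal_params_general (n : ℕ) (φ : ℂ) (hφ : ‖φ‖ < 1) :
    ∫ θ in (-Real.pi)..Real.pi,
      (Complex.exp (θ * Complex.I)) ^ n *
        (((1 / (2 * Real.pi)) * (1 - ‖φ‖ ^ 2) ^ 3 /
          ((1 + ‖φ‖ ^ 2) *
            ‖Complex.exp (θ * Complex.I) - φ‖ ^ 4) : ℝ) : ℂ)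
      = ((1 + (n : ℂ) + (1 - (n : ℂ)) * ((‖φ‖ ^ 2 : ℝ) : ℂ)) /
          (1 + ((‖φ‖ ^ 2 : ℝ) : ℂ))) * φ ^ n := by
  set density : ℂ → ℂ := fun z => z ^ n * (((1 / (2 * Real.pi)) * (1 - ‖φ‖ ^ 2) ^ 3 /
    ((1 + ‖φ‖ ^ 2) * ‖z - φ‖ ^ 4) : ℝ) : ℂ)
  set c : ℝ := (1 / (2 * π)) * (1 - ‖φ‖ ^ 2) ^ 3 / (1 + ‖φ‖ ^ 2)
  set f : ℂ → ℂ := fun z => z ^ (n + 1) / (1 - conj φ * z) ^ 2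
  have hcontour : EqOn (fun z => z⁻¹ • density z) (fun z => (c : ℂ) • (((z - φ) ^ 2)⁻¹ • f z))
      (sphere 0 1) := fun z hz => by
    have hz1 : ‖z‖ = 1 := by simpa using hz
    simp only [density, smul_eq_mul, div_mul_eq_div_div _ (1 + ‖φ‖ ^ 2)]
    exact inv_mul_pow_mul_div_norm_sub_pow_four n c hz1 fun h => by simp [h, hφ.ne] at hz1
  have hf : DifferentiableOn ℂ f {z | conj φ * z ≠ 1} :=
    DifferentiableOn.fun_div (by fun_prop) (by fun_prop)
      fun z hz => pow_ne_zero 2 (sub_ne_zero.mpr (Ne.symm hz))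
  have hcauchy : (∮ z in C(0, 1), ((z - φ) ^ 2)⁻¹ • f z) = (2 * π * I) • deriv f φ :=
    (inv_smul_eq_iff₀ (by simp [pi_ne_zero])).mp <|
      two_pi_I_inv_smul_circleIntegral_sub_sq_inv_smul_of_differentiable
        (isOpen_ne_fun (by fun_prop) continuous_const)
        (fun z hz => conj_mul_ne_one hφ (by simpa using hz)) hf (by simpa using hφ)
  rw [integral_neg_pi_pi_comp_exp_mul_I density,
    circleIntegral.integral_congr zero_le_one hcontour, circleIntegral.integral_smul, hcauchy,
    deriv_pow_succ_div_one_sub_mul_sq n (conj_mul_ne_one hφ hφ.le), conj_mul']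
  have hr : (1 : ℂ) - ‖φ‖ ^ 2 ≠ 0 := by
    norm_cast; nlinarith [norm_nonneg φ]
  simp only [c, smul_eq_mul]
  push_cast
  field_simp [pi_ne_zero, I_ne_zero]
  ring

/-- The `n`th trigonometric moment of the EWC-type distribution on the unit circle with
`φ₁ = φ₂ = φ ≠ 0`: the density (with respect to arc length) is
`f(z) = (1/2π)·(1-|φ|²)³ / ((1+|φ|²)·|z-φ|⁴)`, and
`E(Zⁿ) = ((1+n+(1-n)|φ|²)/(1+|φ|²))·φⁿ`. -/
theorem ewc_trig_moment_equal_params (n : ℕ) (φ : ℂ) (hφ : ‖φ‖ < 1) (hφ0 : φ ≠ 0) :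
    ∫ θ in (-Real.pi)..Real.pi,
      (Complex.exp (θ * Complex.I)) ^ n *
        (((1 / (2 * Real.pi)) * (1 - ‖φ‖ ^ 2) ^ 3 /
          ((1 + ‖φ‖ ^ 2) *
            ‖Complex.exp (θ * Complex.I) - φ‖ ^ 4) : ℝ) : ℂ)
      = ((1 + (n : ℂ) + (1 - (n : ℂ)) * ((‖φ‖ ^ 2 : ℝ) : ℂ)) /
          (1 + ((‖φ‖ ^ 2 : ℝ) : ℂ))) * φ ^ n :=
  ewc_trig_moment_equal_params_general n φ hφ
end

section
/- The EWC density f(θ; μ₁, μ₂, ρ₁, ρ₂) is symmetric (i.e., there exists c such that f(c+θ) = f(c−θ) for all θ) if and only if ρ₁ = ρ₂, or ρ₁ = 0, or ρ₂ = 0, or μ₁ = μ₂ (mod 2π), or μ₁ = μ₂ + π (mod 2π). -/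
open Real

/-- The extended wrapped Cauchy (EWC) density, as a `2π`-periodic function on `ℝ`. -/
noncomputable def ewcDensity (μ₁ μ₂ ρ₁ ρ₂ θ : ℝ) : ℝ :=
  ewcC μ₁ μ₂ ρ₁ ρ₂ *
    ((1 + ρ₁ ^ 2 - 2 * ρ₁ * Real.cos (θ - μ₁)) *
      (1 + ρ₂ ^ 2 - 2 * ρ₂ * Real.cos (θ - μ₂)))⁻¹

lemma ewcC_pos {μ₁ μ₂ ρ₁ ρ₂ : ℝ} (h10 : 0 ≤ ρ₁) (h11 : ρ₁ < 1)
    (h20 : 0 ≤ ρ₂) (h21 : ρ₂ < 1) : 0 < ewcC μ₁ μ₂ ρ₁ ρ₂ := by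
  have hπ := Real.pi_pos
  have hc1 := Real.cos_le_one (μ₁ - μ₂)
  have h12 : ρ₁ * ρ₂ < 1 := by nlinarith
  have hn1 : (0:ℝ) < 1 - ρ₁ ^ 2 := by nlinarith
  have hn2 : (0:ℝ) < 1 - ρ₂ ^ 2 := by nlinarith
  have hn3 : (0:ℝ) < 1 + ρ₁ ^ 2 * ρ₂ ^ 2 - 2 * ρ₁ * ρ₂ * Real.cos (μ₁ - μ₂) := by
    nlinarith [mul_nonneg h10 h20, sq_nonneg (1 - ρ₁ * ρ₂)]
  have hn4 : (0:ℝ) < 1 - ρ₁ ^ 2 * ρ₂ ^ 2 := by nlinarith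
  exact div_pos (mul_pos (mul_pos hn1 hn2) hn3) (mul_pos (by positivity) hn4)

/-- The EWC density is symmetric (has a reflection axis on the circle) if and only if
`ρ₁ = ρ₂`, `ρ₁ = 0`, `ρ₂ = 0`, `μ₁ = μ₂ (mod 2π)` or `μ₁ = μ₂ + π (mod 2π)`. -/
theorem ewc_symmetric_iff (μ₁ μ₂ ρ₁ ρ₂ : ℝ)
    (hμ₁ : μ₁ ∈ Set.Ico (-Real.pi) Real.pi) (hμ₂ : μ₂ ∈ Set.Ico (-Real.pi) Real.pi)
    (hρ₁ : ρ₁ ∈ Set.Ico (0 : ℝ) 1) (hρ₂ : ρ₂ ∈ Set.Ico (0 : ℝ) 1) :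
    (∃ c : ℝ, ∀ θ : ℝ, ewcDensity μ₁ μ₂ ρ₁ ρ₂ (c + θ) = ewcDensity μ₁ μ₂ ρ₁ ρ₂ (c - θ))
      ↔ (ρ₁ = ρ₂ ∨ ρ₁ = 0 ∨ ρ₂ = 0 ∨ (∃ k : ℤ, μ₁ = μ₂ + 2 * Real.pi * k) ∨
          (∃ k : ℤ, μ₁ = μ₂ + Real.pi + 2 * Real.pi * k)) := by
  obtain ⟨hρ₁0, hρ₁1⟩ := hρ₁
  obtain ⟨hρ₂0, hρ₂1⟩ := hρ₂
  have hC : 0 < ewcC μ₁ μ₂ ρ₁ ρ₂ := ewcC_pos hρ₁0 hρ₁1 hρ₂0 hρ₂1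
  have key : ∀ x y : ℝ, (ewcDensity μ₁ μ₂ ρ₁ ρ₂ x = ewcDensity μ₁ μ₂ ρ₁ ρ₂ y ↔
      (1 + ρ₁ ^ 2 - 2 * ρ₁ * Real.cos (x - μ₁)) * (1 + ρ₂ ^ 2 - 2 * ρ₂ * Real.cos (x - μ₂)) =
      (1 + ρ₁ ^ 2 - 2 * ρ₁ * Real.cos (y - μ₁)) * (1 + ρ₂ ^ 2 - 2 * ρ₂ * Real.cos (y - μ₂))) := by
    intro x y
    unfold ewcDensity
    rw [mul_right_inj' (ne_of_gt hC), inv_inj]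
  constructor
  · rintro ⟨c, hc⟩
    by_cases h1 : ρ₁ = 0
    · exact Or.inr (Or.inl h1)
    by_cases h2 : ρ₂ = 0
    · exact Or.inr (Or.inr (Or.inl h2))
    have hden : ∀ θ : ℝ,
        (1 + ρ₁ ^ 2 - 2 * ρ₁ * Real.cos (c + θ - μ₁)) * (1 + ρ₂ ^ 2 - 2 * ρ₂ * Real.cos (c + θ - μ₂)) =
        (1 + ρ₁ ^ 2 - 2 * ρ₁ * Real.cos (c - θ - μ₁)) * (1 + ρ₂ ^ 2 - 2 * ρ₂ * Real.cos (c - θ - μ₂)) :=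
      fun θ => (key _ _).mp (hc θ)
    set S₁ := Real.sin (c - μ₁) with hS₁def
    set S₂ := Real.sin (c - μ₂) with hS₂def
    set C₁ := Real.cos (c - μ₁) with hC₁def
    set C₂ := Real.cos (c - μ₂) with hC₂def
    -- Equation from θ = π/2
    have h2' := hden (Real.pi / 2)
    rw [show c + Real.pi / 2 - μ₁ = (c - μ₁) + Real.pi / 2 by ring,
        show c + Real.pi / 2 - μ₂ = (c - μ₂) + Real.pi / 2 by ring,
        show c - Real.pi / 2 - μ₁ = (c - μ₁) - Real.pi / 2 by ring,
        show c - Real.pi / 2 - μ₂ = (c - μ₂) - Real.pi / 2 by ring,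
        Real.cos_add_pi_div_two, Real.cos_add_pi_div_two,
        Real.cos_sub_pi_div_two, Real.cos_sub_pi_div_two] at h2'
    have E1 : (1 + ρ₁ ^ 2) * ρ₂ * S₂ + (1 + ρ₂ ^ 2) * ρ₁ * S₁ = 0 := by
      linear_combination h2' / 4
    -- Equation from θ = π/4
    have h4' := hden (Real.pi / 4)
    have f1 : Real.cos ((c - μ₁) + Real.pi / 4) = C₁ * (Real.sqrt 2 / 2) - S₁ * (Real.sqrt 2 / 2) := by
      rw [Real.cos_add, Real.cos_pi_div_four, Real.sin_pi_div_four]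
    have f2 : Real.cos ((c - μ₂) + Real.pi / 4) = C₂ * (Real.sqrt 2 / 2) - S₂ * (Real.sqrt 2 / 2) := by
      rw [Real.cos_add, Real.cos_pi_div_four, Real.sin_pi_div_four]
    have f3 : Real.cos ((c - μ₁) - Real.pi / 4) = C₁ * (Real.sqrt 2 / 2) + S₁ * (Real.sqrt 2 / 2) := by
      rw [Real.cos_sub, Real.cos_pi_div_four, Real.sin_pi_div_four]
    have f4 : Real.cos ((c - μ₂) - Real.pi / 4) = C₂ * (Real.sqrt 2 / 2) + S₂ * (Real.sqrt 2 / 2) := by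
      rw [Real.cos_sub, Real.cos_pi_div_four, Real.sin_pi_div_four]
    rw [show c + Real.pi / 4 - μ₁ = (c - μ₁) + Real.pi / 4 by ring,
        show c + Real.pi / 4 - μ₂ = (c - μ₂) + Real.pi / 4 by ring,
        show c - Real.pi / 4 - μ₁ = (c - μ₁) - Real.pi / 4 by ring,
        show c - Real.pi / 4 - μ₂ = (c - μ₂) - Real.pi / 4 by ring,
        f1, f2, f3, f4] at h4'
    have hs : Real.sqrt 2 ^ 2 = 2 := Real.sq_sqrt (by norm_num)
    have E2 : ρ₁ * ρ₂ * (C₁ * S₂ + C₂ * S₁) = 0 := by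
      linear_combination (-(1/4)) * h4' + (Real.sqrt 2 / 2) * E1
        - (ρ₁ * ρ₂ * (C₁ * S₂ + C₂ * S₁) / 2) * hs
    have hX : C₁ * S₂ + C₂ * S₁ = 0 := by
      rcases mul_eq_zero.mp E2 with h | h
      · rcases mul_eq_zero.mp h with h | h
        · exact absurd h h1
        · exact absurd h h2
      · exact h
    have hsin : Real.sin ((c - μ₁) + (c - μ₂)) = 0 := by
      rw [Real.sin_add]; linarith
    obtain ⟨k, hk⟩ := Real.sin_eq_zero_iff.mp hsin
    have hρ₁pos : 0 < ρ₁ := lt_of_le_of_ne hρ₁0 (Ne.symm h1)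
    have hρ₂pos : 0 < ρ₂ := lt_of_le_of_ne hρ₂0 (Ne.symm h2)
    rcases Int.even_or_odd k with ⟨m, hm⟩ | ⟨m, hm⟩
    · -- k = m + m : axis aligned with (μ₁+μ₂)/2
      have hc₁ : c - μ₁ = (μ₂ - μ₁) / 2 + (m : ℝ) * Real.pi := by
        have h' : ((m : ℝ) + m) * Real.pi = (c - μ₁) + (c - μ₂) := by
          rw [hm] at hk; push_cast at hk ⊢; linarith only [hk]
        linarith only [h']
      have hc₂ : c - μ₂ = (μ₁ - μ₂) / 2 + (m : ℝ) * Real.pi := by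
        have h' : ((m : ℝ) + m) * Real.pi = (c - μ₁) + (c - μ₂) := by
          rw [hm] at hk; push_cast at hk ⊢; linarith only [hk]
        linarith only [h']
      have hS₁' : S₁ = (-1) ^ m * Real.sin ((μ₂ - μ₁) / 2) := by
        rw [hS₁def, hc₁, Real.sin_add_int_mul_pi]
      have hS₂' : S₂ = -((-1) ^ m * Real.sin ((μ₂ - μ₁) / 2)) := by
        rw [hS₂def, hc₂, Real.sin_add_int_mul_pi,
          show (μ₁ - μ₂) / 2 = -((μ₂ - μ₁) / 2) by ring, Real.sin_neg]
        ring
      have Efin : (-1 : ℝ) ^ m * (Real.sin ((μ₂ - μ₁) / 2) * ((ρ₁ - ρ₂) * (1 - ρ₁ * ρ₂))) = 0 := by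
        rw [hS₁', hS₂'] at E1; linear_combination E1
      have hpow : ((-1 : ℝ) ^ m) ≠ 0 := zpow_ne_zero _ (by norm_num)
      have Efin' : Real.sin ((μ₂ - μ₁) / 2) * ((ρ₁ - ρ₂) * (1 - ρ₁ * ρ₂)) = 0 :=
        (mul_eq_zero.mp Efin).resolve_left hpow
      rcases mul_eq_zero.mp Efin' with h | h
      · obtain ⟨j, hj⟩ := Real.sin_eq_zero_iff.mp h
        refine Or.inr (Or.inr (Or.inr (Or.inl ⟨-j, ?_⟩)))
        push_cast
        linarith only [hj]
      · rcases mul_eq_zero.mp h with h | h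
        · exact Or.inl (sub_eq_zero.mp h)
        · exact absurd h (sub_ne_zero_of_ne
            (lt_of_le_of_lt (mul_le_of_le_one_right hρ₁0 hρ₂1.le) hρ₁1).ne')
    · -- k = 2m + 1 : axis at (μ₁+μ₂)/2 + π/2
      have hsum : ((2 * (m : ℝ)) + 1) * Real.pi = (c - μ₁) + (c - μ₂) := by
        rw [hm] at hk; push_cast at hk ⊢; linarith only [hk]
      have hc₁ : c - μ₁ = ((μ₂ - μ₁) / 2 + Real.pi / 2) + (m : ℝ) * Real.pi := by
        linarith only [hsum]
      have hc₂ : c - μ₂ = ((μ₁ - μ₂) / 2 + Real.pi / 2) + (m : ℝ) * Real.pi := by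
        linarith only [hsum]
      have hS₁' : S₁ = (-1) ^ m * Real.cos ((μ₂ - μ₁) / 2) := by
        rw [hS₁def, hc₁, Real.sin_add_int_mul_pi, Real.sin_add_pi_div_two]
      have hS₂' : S₂ = (-1) ^ m * Real.cos ((μ₂ - μ₁) / 2) := by
        rw [hS₂def, hc₂, Real.sin_add_int_mul_pi, Real.sin_add_pi_div_two,
          show (μ₁ - μ₂) / 2 = -((μ₂ - μ₁) / 2) by ring, Real.cos_neg]
      have Efin : (-1 : ℝ) ^ m *
          (Real.cos ((μ₂ - μ₁) / 2) * ((1 + ρ₁ ^ 2) * ρ₂ + (1 + ρ₂ ^ 2) * ρ₁)) = 0 := by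
        rw [hS₁', hS₂'] at E1; linear_combination E1
      have hpow : ((-1 : ℝ) ^ m) ≠ 0 := zpow_ne_zero _ (by norm_num)
      have Efin' : Real.cos ((μ₂ - μ₁) / 2) * ((1 + ρ₁ ^ 2) * ρ₂ + (1 + ρ₂ ^ 2) * ρ₁) = 0 :=
        (mul_eq_zero.mp Efin).resolve_left hpow
      rcases mul_eq_zero.mp Efin' with h | h
      · obtain ⟨j, hj⟩ := Real.cos_eq_zero_iff.mp h
        refine Or.inr (Or.inr (Or.inr (Or.inr ⟨-j - 1, ?_⟩)))
        push_cast at hj ⊢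
        linarith only [hj]
      · have hpos : (0:ℝ) < (1 + ρ₁ ^ 2) * ρ₂ + (1 + ρ₂ ^ 2) * ρ₁ :=
          add_pos (mul_pos (by positivity) hρ₂pos) (mul_pos (by positivity) hρ₁pos)
        exact absurd h hpos.ne'
  · rintro (h | h | h | ⟨k, hk⟩ | ⟨k, hk⟩)
    · -- ρ₁ = ρ₂ : axis at (μ₁ + μ₂)/2
      subst h
      refine ⟨(μ₁ + μ₂) / 2, fun θ => (key _ _).mpr ?_⟩
      have e1 : Real.cos ((μ₁ + μ₂) / 2 - θ - μ₂) = Real.cos ((μ₁ + μ₂) / 2 + θ - μ₁) := by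
        rw [show (μ₁ + μ₂) / 2 - θ - μ₂ = -((μ₁ + μ₂) / 2 + θ - μ₁) by ring, Real.cos_neg]
      have e2 : Real.cos ((μ₁ + μ₂) / 2 - θ - μ₁) = Real.cos ((μ₁ + μ₂) / 2 + θ - μ₂) := by
        rw [show (μ₁ + μ₂) / 2 - θ - μ₁ = -((μ₁ + μ₂) / 2 + θ - μ₂) by ring, Real.cos_neg]
      rw [e1, e2]; ring
    · -- ρ₁ = 0 : axis at μ₂
      subst h
      refine ⟨μ₂, fun θ => (key _ _).mpr ?_⟩
      rw [show μ₂ + θ - μ₂ = θ by ring, show μ₂ - θ - μ₂ = -θ by ring, Real.cos_neg]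
      ring
    · -- ρ₂ = 0 : axis at μ₁
      subst h
      refine ⟨μ₁, fun θ => (key _ _).mpr ?_⟩
      rw [show μ₁ + θ - μ₁ = θ by ring, show μ₁ - θ - μ₁ = -θ by ring, Real.cos_neg]
      ring
    · -- μ₁ = μ₂ + 2πk : axis at μ₂
      refine ⟨μ₂, fun θ => (key _ _).mpr ?_⟩
      have e1 : Real.cos (μ₂ + θ - μ₁) = Real.cos θ := by
        rw [hk, show μ₂ + θ - (μ₂ + 2 * Real.pi * k) = θ + (-k : ℤ) * (2 * Real.pi) by
          push_cast; ring, Real.cos_add_int_mul_two_pi]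
      have e2 : Real.cos (μ₂ - θ - μ₁) = Real.cos θ := by
        rw [hk, show μ₂ - θ - (μ₂ + 2 * Real.pi * k) = -θ + (-k : ℤ) * (2 * Real.pi) by
          push_cast; ring, Real.cos_add_int_mul_two_pi, Real.cos_neg]
      rw [e1, e2, show μ₂ + θ - μ₂ = θ by ring, show μ₂ - θ - μ₂ = -θ by ring, Real.cos_neg]
    · -- μ₁ = μ₂ + π + 2πk : axis at μ₁
      refine ⟨μ₁, fun θ => (key _ _).mpr ?_⟩
      have e1 : Real.cos (μ₁ + θ - μ₂) = -Real.cos θ := by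
        rw [hk, show μ₂ + Real.pi + 2 * Real.pi * k + θ - μ₂
            = (θ + Real.pi) + (k : ℤ) * (2 * Real.pi) by push_cast; ring,
          Real.cos_add_int_mul_two_pi, Real.cos_add_pi]
      have e2 : Real.cos (μ₁ - θ - μ₂) = -Real.cos θ := by
        rw [hk, show μ₂ + Real.pi + 2 * Real.pi * k - θ - μ₂
            = (-θ + Real.pi) + (k : ℤ) * (2 * Real.pi) by push_cast; ring,
          Real.cos_add_int_mul_two_pi, Real.cos_add_pi, Real.cos_neg]
      rw [e1, e2, show μ₁ + θ - μ₁ = θ by ring, show μ₁ - θ - μ₁ = -θ by ring, Real.cos_neg]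
end

section
/- For ρ ∈ [0,1) and μ ∈ [−π, π), the function f(θ) = (1/2π)·((1−ρ²)/(1+ρ²))·((1−ρ²)/(1+ρ²−2ρcos(θ−μ)))² integrates to 1 over [−π, π). -/
/-!
Write `D θ = 1 + ρ² - 2ρ cos θ`. The Poisson kernel `(1 - ρ²) / D` has the primitive
`θ + 2 arctan (ρ sin θ / (1 - ρ cos θ))`, which, unlike the usual `tan (θ / 2)` substitution, is
smooth on all of `[-π, π]` because `1 - ρ cos θ > 0`; hence the kernel integrates to `2π`.
Its square reduces to the kernel itself:
`((1 - ρ²) / D)² = (1 + ρ²) / (1 - ρ²) · (1 - ρ²) / D + 2ρ · (sin θ / D)'`,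
and `sin θ / D` vanishes at `±π`, so `∫ ((1 - ρ²) / D)² = 2π (1 + ρ²) / (1 - ρ²)`, which is the
reciprocal of the normalising constant. The shift by `μ` is absorbed by `2π`-periodicity.
-/

open Real intervalIntegral

theorem Function.Periodic.intervalIntegral_comp_sub_right {E : Type*} [NormedAddCommGroup E]
    [NormedSpace ℝ E] {f : ℝ → E} {T : ℝ} (hf : Function.Periodic f T) (t c : ℝ) :
    ∫ x in t..t + T, f (x - c) = ∫ x in t..t + T, f x := by
  rw [integral_comp_sub_right, show t + T - c = t - c + T by ring, hf.intervalIntegral_add_eq]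

section PoissonKernel

variable {ρ : ℝ}

theorem one_sub_mul_cos_pos (hρ : |ρ| < 1) (θ : ℝ) : 0 < 1 - ρ * cos θ := by
  have : |ρ * cos θ| < 1 := by
    rw [abs_mul]; nlinarith [abs_cos_le_one θ, abs_nonneg ρ]
  linarith [le_abs_self (ρ * cos θ)]

theorem one_add_sq_sub_two_mul_cos_pos (hρ : |ρ| < 1) (θ : ℝ) :
    0 < 1 + ρ ^ 2 - 2 * ρ * cos θ := by
  nlinarith [one_sub_mul_cos_pos hρ θ, sq_abs ρ, abs_nonneg ρ, sin_sq_add_cos_sq θ,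
    sq_nonneg (ρ * sin θ)]

theorem hasDerivAt_add_two_mul_arctan (hρ : |ρ| < 1) (θ : ℝ) :
    HasDerivAt (fun θ => θ + 2 * arctan (ρ * sin θ / (1 - ρ * cos θ)))
      ((1 - ρ ^ 2) / (1 + ρ ^ 2 - 2 * ρ * cos θ)) θ := by
  have hc := one_sub_mul_cos_pos hρ θ
  have hD := one_add_sq_sub_two_mul_cos_pos hρ θ
  have hu : HasDerivAt (fun θ => ρ * sin θ / (1 - ρ * cos θ))
      ((ρ * cos θ * (1 - ρ * cos θ) - ρ * sin θ * (ρ * sin θ)) / (1 - ρ * cos θ) ^ 2) θ :=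
    (((hasDerivAt_sin θ).const_mul ρ).div
      (((hasDerivAt_cos θ).const_mul ρ).const_sub 1) hc.ne').congr_deriv (by ring)
  have hnorm : (1 - ρ * cos θ) ^ 2 + (ρ * sin θ) ^ 2 = 1 + ρ ^ 2 - 2 * ρ * cos θ := by
    linear_combination ρ ^ 2 * sin_sq_add_cos_sq θ
  refine ((hasDerivAt_id' θ).add (hu.arctan.const_mul 2)).congr_deriv ?_
  rw [div_pow, one_add_div (by positivity), hnorm]
  field_simp
  linear_combination (-2 * ρ ^ 2) * sin_sq_add_cos_sq θ

theorem hasDerivAt_sin_div (hρ : |ρ| < 1) (θ : ℝ) :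
    HasDerivAt (fun θ => sin θ / (1 + ρ ^ 2 - 2 * ρ * cos θ))
      (((1 + ρ ^ 2) * cos θ - 2 * ρ) / (1 + ρ ^ 2 - 2 * ρ * cos θ) ^ 2) θ := by
  have hD := one_add_sq_sub_two_mul_cos_pos hρ θ
  refine ((hasDerivAt_sin θ).div
    (((hasDerivAt_cos θ).const_mul (2 * ρ)).const_sub (1 + ρ ^ 2)) hD.ne').congr_deriv ?_
  congr 1
  linear_combination (-2 * ρ) * sin_sq_add_cos_sq θ

theorem continuous_poissonKernel (hρ : |ρ| < 1) :
    Continuous fun θ => (1 - ρ ^ 2) / (1 + ρ ^ 2 - 2 * ρ * cos θ) :=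
  continuous_const.div (by fun_prop) fun θ => (one_add_sq_sub_two_mul_cos_pos hρ θ).ne'

theorem integral_poissonKernel (hρ : |ρ| < 1) :
    ∫ θ in -π..π, (1 - ρ ^ 2) / (1 + ρ ^ 2 - 2 * ρ * cos θ) = 2 * π := by
  rw [integral_eq_sub_of_hasDerivAt (fun θ _ => hasDerivAt_add_two_mul_arctan hρ θ)
    ((continuous_poissonKernel hρ).intervalIntegrable _ _)]
  simp only [sin_pi, mul_zero, cos_pi, mul_neg, mul_one, sub_neg_eq_add, zero_div, arctan_zero,
    add_zero, sin_neg, neg_zero, cos_neg]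
  ring

theorem integral_poissonKernel_sq (hρ : |ρ| < 1) :
    ∫ θ in -π..π, ((1 - ρ ^ 2) / (1 + ρ ^ 2 - 2 * ρ * cos θ)) ^ 2
      = 2 * π * (1 + ρ ^ 2) / (1 - ρ ^ 2) := by
  have hρ2 : 1 - ρ ^ 2 ≠ 0 := by nlinarith [sq_abs ρ, abs_nonneg ρ]
  have hsplit : ∀ θ, ((1 - ρ ^ 2) / (1 + ρ ^ 2 - 2 * ρ * cos θ)) ^ 2
      = (1 + ρ ^ 2) / (1 - ρ ^ 2) * ((1 - ρ ^ 2) / (1 + ρ ^ 2 - 2 * ρ * cos θ))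
        + 2 * ρ * (((1 + ρ ^ 2) * cos θ - 2 * ρ) / (1 + ρ ^ 2 - 2 * ρ * cos θ) ^ 2) := by
    intro θ
    have hD := (one_add_sq_sub_two_mul_cos_pos hρ θ).ne'
    field_simp
    ring
  have hderiv_cont : Continuous fun θ =>
      ((1 + ρ ^ 2) * cos θ - 2 * ρ) / (1 + ρ ^ 2 - 2 * ρ * cos θ) ^ 2 :=
    (by fun_prop : Continuous _).div (by fun_prop)
      fun θ => pow_ne_zero 2 (one_add_sq_sub_two_mul_cos_pos hρ θ).ne'
  simp_rw [hsplit]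
  rw [integral_add (((continuous_poissonKernel hρ).intervalIntegrable _ _).const_mul _)
      ((hderiv_cont.intervalIntegrable _ _).const_mul _), integral_const_mul, integral_const_mul,
    integral_poissonKernel hρ, integral_eq_sub_of_hasDerivAt
      (fun θ _ => hasDerivAt_sin_div hρ θ) (hderiv_cont.intervalIntegrable _ _)]
  simp only [sin_pi, cos_pi, mul_neg, mul_one, sub_neg_eq_add, zero_div, sin_neg, neg_zero,
    cos_neg, sub_self, mul_zero, add_zero]
  field_simp

end PoissonKernel

theorem ewc_equal_params_integral_eq_one_general (ρ μ : ℝ)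
    (hρ : ρ ∈ Set.Ico (0 : ℝ) 1) :
    ∫ θ in (-Real.pi)..Real.pi,
      (1 / (2 * Real.pi)) * ((1 - ρ ^ 2) / (1 + ρ ^ 2)) *
        ((1 - ρ ^ 2) / (1 + ρ ^ 2 - 2 * ρ * Real.cos (θ - μ))) ^ 2 = 1 := by
  have hρ' : |ρ| < 1 := abs_lt.2 ⟨by linarith [hρ.1], hρ.2⟩
  have hper : Function.Periodic (fun θ => (1 / (2 * π)) * ((1 - ρ ^ 2) / (1 + ρ ^ 2)) *
      ((1 - ρ ^ 2) / (1 + ρ ^ 2 - 2 * ρ * cos θ)) ^ 2) (2 * π) := by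
    intro θ
    simp only [cos_add_two_pi]
  have hshift := hper.intervalIntegral_comp_sub_right (-π) μ
  rw [show -π + 2 * π = π by ring] at hshift
  rw [hshift, integral_const_mul, integral_poissonKernel_sq hρ']
  have hρ2 : 1 - ρ ^ 2 ≠ 0 := by nlinarith [hρ.1, hρ.2]
  field_simp

/-- The EWC density in the special case `ρ₁ = ρ₂ = ρ`, `μ₁ = μ₂ = μ` (a submodel of the
Jones–Pewsey family) integrates to 1 over `[-π, π)`. -/
theorem ewc_equal_params_integral_eq_one (ρ μ : ℝ)
    (hρ : ρ ∈ Set.Ico (0 : ℝ) 1) (hμ : μ ∈ Set.Ico (-Real.pi) Real.pi) :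
    ∫ θ in (-Real.pi)..Real.pi,
      (1 / (2 * Real.pi)) * ((1 - ρ ^ 2) / (1 + ρ ^ 2)) *
        ((1 - ρ ^ 2) / (1 + ρ ^ 2 - 2 * ρ * Real.cos (θ - μ))) ^ 2 = 1 :=
  ewc_equal_params_integral_eq_one_general ρ μ hρ
end

section
/- For 0 ≤ ρ₁ < 1, 0 ≤ ρ₂ < 1 with ρ₁ρ₂ > 0, one has (ρ₁+ρ₂)(1+ρ₁ρ₂)/(4ρ₁ρ₂) ≥ 1; consequently the symmetric density f(θ) ∝ [(1+ρ₁²−2ρ₁cos θ)(1+ρ₂²−2ρ₂cos θ)]⁻¹ on the circle has stationary points only where sin θ = 0, and is unimodal with mode at θ = 0. -/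
/-!
Each factor `1 + ρ² - 2ρ cos θ` is positive for `|ρ| ≠ 1` and, for `ρ ≥ 0`,
increasing on `[0, π]` because `cos` decreases there. Hence the density, the reciprocal of their
product, decreases on `[0, π]`, and being even it increases on `[-π, 0]`. Its derivative is
`-2 sin θ (ρ₁ D₂ + ρ₂ D₁) / (D₁ D₂)²` with `Dᵢ` the two factors, and the weight `ρ₁ D₂ + ρ₂ D₁` is
positive, so it vanishes only where `sin θ = 0`.
-/

open Real

-- `(a + b)(1 + ab) - 4ab = a(1 - b)² + b(1 - a)²`
theorem four_mul_mul_le_add_mul_one_add_mul {a b : ℝ} (ha : 0 ≤ a) (hb : 0 ≤ b) :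
    4 * (a * b) ≤ (a + b) * (1 + a * b) := by
  nlinarith [mul_nonneg ha (sq_nonneg (1 - b)), mul_nonneg hb (sq_nonneg (1 - a))]

theorem Function.Even.monotoneOn_Icc_neg {f : ℝ → ℝ} (hf : f.Even) {a : ℝ}
    (h : AntitoneOn f (Set.Icc 0 a)) : MonotoneOn f (Set.Icc (-a) 0) := by
  intro x hx y hy hxy
  rw [← hf x, ← hf y]
  exact h ⟨neg_nonneg.2 hy.2, neg_le.1 hy.1⟩ ⟨neg_nonneg.2 hx.2, neg_le.1 hx.1⟩ (neg_le_neg hxy)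

/-- `|1 - ρ e^{iθ}|²`, the denominator of the wrapped Cauchy density. -/
noncomputable def cauchyDenom (ρ θ : ℝ) : ℝ := 1 + ρ ^ 2 - 2 * ρ * cos θ

namespace cauchyDenom

theorem pos {ρ : ℝ} (hρ : |ρ| ≠ 1) (θ : ℝ) : 0 < cauchyDenom ρ θ := by
  have hcos : ρ * cos θ ≤ |ρ| := by
    calc ρ * cos θ ≤ |ρ * cos θ| := le_abs_self _
      _ = |ρ| * |cos θ| := abs_mul _ _
      _ ≤ |ρ| := mul_le_of_le_one_right (abs_nonneg ρ) (abs_cos_le_one θ)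
  calc (0 : ℝ) < (1 - |ρ|) ^ 2 := sq_pos_of_ne_zero (sub_ne_zero.2 hρ.symm)
    _ ≤ cauchyDenom ρ θ := by unfold cauchyDenom; nlinarith [sq_abs ρ]

theorem even (ρ : ℝ) : (cauchyDenom ρ).Even := fun θ => by simp [cauchyDenom]

theorem hasDerivAt (ρ θ : ℝ) : HasDerivAt (cauchyDenom ρ) (2 * ρ * sin θ) θ :=
  (((hasDerivAt_cos θ).const_mul (2 * ρ)).const_sub (1 + ρ ^ 2)).congr_deriv (by ring)

theorem monotoneOn {ρ : ℝ} (hρ : 0 ≤ ρ) : MonotoneOn (cauchyDenom ρ) (Set.Icc 0 π) :=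
  fun _ hx _ hy hxy => by
    unfold cauchyDenom
    nlinarith [antitoneOn_cos hx hy hxy]

end cauchyDenom

/-- The EWC density with `μ₁ = μ₂ = 0`, unnormalized. -/
noncomputable def symmEWCDensity (ρ₁ ρ₂ θ : ℝ) : ℝ := (cauchyDenom ρ₁ θ * cauchyDenom ρ₂ θ)⁻¹

namespace symmEWCDensity

variable {ρ₁ ρ₂ : ℝ}

theorem even (ρ₁ ρ₂ : ℝ) : (symmEWCDensity ρ₁ ρ₂).Even := fun θ => by
  simp only [symmEWCDensity, cauchyDenom.even ρ₁ θ, cauchyDenom.even ρ₂ θ]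

theorem hasDerivAt (hρ₁ : |ρ₁| ≠ 1) (hρ₂ : |ρ₂| ≠ 1) (θ : ℝ) :
    HasDerivAt (symmEWCDensity ρ₁ ρ₂)
      (-(2 * sin θ * (ρ₁ * cauchyDenom ρ₂ θ + ρ₂ * cauchyDenom ρ₁ θ)) /
        (cauchyDenom ρ₁ θ * cauchyDenom ρ₂ θ) ^ 2) θ := by
  have hD := (cauchyDenom.hasDerivAt ρ₁ θ).mul (cauchyDenom.hasDerivAt ρ₂ θ)
  exact (hD.inv (mul_pos (cauchyDenom.pos hρ₁ θ) (cauchyDenom.pos hρ₂ θ)).ne').congr_deriv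
    (by rw [Pi.mul_apply]; ring)

theorem sin_eq_zero_of_deriv_eq_zero (hρ₁ : 0 < ρ₁) (hρ₁' : |ρ₁| ≠ 1) (hρ₂ : 0 ≤ ρ₂)
    (hρ₂' : |ρ₂| ≠ 1) {θ : ℝ} (hθ : deriv (symmEWCDensity ρ₁ ρ₂) θ = 0) : sin θ = 0 := by
  have hD₁ := cauchyDenom.pos hρ₁' θ
  have hD₂ := cauchyDenom.pos hρ₂' θ
  rw [(hasDerivAt hρ₁' hρ₂' θ).deriv, div_eq_zero_iff, neg_eq_zero] at hθ
  have hweight : 0 < ρ₁ * cauchyDenom ρ₂ θ + ρ₂ * cauchyDenom ρ₁ θ := by positivity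
  have hden : 0 < (cauchyDenom ρ₁ θ * cauchyDenom ρ₂ θ) ^ 2 := by positivity
  simpa [hweight.ne', hden.ne'] using hθ

theorem antitoneOn (hρ₁ : 0 ≤ ρ₁) (hρ₁' : |ρ₁| ≠ 1) (hρ₂ : 0 ≤ ρ₂) (hρ₂' : |ρ₂| ≠ 1) :
    AntitoneOn (symmEWCDensity ρ₁ ρ₂) (Set.Icc 0 π) := by
  have hD := (cauchyDenom.monotoneOn hρ₁).mul (cauchyDenom.monotoneOn hρ₂)
    (fun θ _ => (cauchyDenom.pos hρ₁' θ).le) (fun θ _ => (cauchyDenom.pos hρ₂' θ).le)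
  exact fun x hx y hy hxy =>
    inv_anti₀ (mul_pos (cauchyDenom.pos hρ₁' x) (cauchyDenom.pos hρ₂' x)) (hD hx hy hxy)

theorem monotoneOn (hρ₁ : 0 ≤ ρ₁) (hρ₁' : |ρ₁| ≠ 1) (hρ₂ : 0 ≤ ρ₂) (hρ₂' : |ρ₂| ≠ 1) :
    MonotoneOn (symmEWCDensity ρ₁ ρ₂) (Set.Icc (-π) 0) :=
  (even ρ₁ ρ₂).monotoneOn_Icc_neg (antitoneOn hρ₁ hρ₁' hρ₂ hρ₂')

end symmEWCDensity

/-- Symmetric case `μ₁ = μ₂ = 0` of the EWC density: the key inequality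
`(ρ₁+ρ₂)(1+ρ₁ρ₂)/(4ρ₁ρ₂) ≥ 1` holds, consequently the (unnormalized) density
`f(θ) = [(1+ρ₁²-2ρ₁cos θ)(1+ρ₂²-2ρ₂cos θ)]⁻¹` has stationary points only where
`sin θ = 0`, and is unimodal with mode at `θ = 0` (increasing on `[-π, 0]` and
decreasing on `[0, π]`). -/
theorem ewc_symmetric_unimodal (ρ₁ ρ₂ : ℝ)
    (hρ₁ : ρ₁ ∈ Set.Ico (0 : ℝ) 1) (hρ₂ : ρ₂ ∈ Set.Ico (0 : ℝ) 1) (hpos : 0 < ρ₁ * ρ₂) :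
    (ρ₁ + ρ₂) * (1 + ρ₁ * ρ₂) / (4 * (ρ₁ * ρ₂)) ≥ 1 ∧
    (∀ θ : ℝ, deriv (fun θ : ℝ =>
        ((1 + ρ₁ ^ 2 - 2 * ρ₁ * Real.cos θ) * (1 + ρ₂ ^ 2 - 2 * ρ₂ * Real.cos θ))⁻¹) θ = 0 →
      Real.sin θ = 0) ∧
    MonotoneOn (fun θ : ℝ =>
        ((1 + ρ₁ ^ 2 - 2 * ρ₁ * Real.cos θ) * (1 + ρ₂ ^ 2 - 2 * ρ₂ * Real.cos θ))⁻¹)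
      (Set.Icc (-Real.pi) 0) ∧
    AntitoneOn (fun θ : ℝ =>
        ((1 + ρ₁ ^ 2 - 2 * ρ₁ * Real.cos θ) * (1 + ρ₂ ^ 2 - 2 * ρ₂ * Real.cos θ))⁻¹)
      (Set.Icc 0 Real.pi) := by
  have habs : ∀ ρ ∈ Set.Ico (0 : ℝ) 1, |ρ| ≠ 1 := fun ρ hρ => by
    rw [abs_of_nonneg hρ.1]
    exact hρ.2.ne
  have hρ₁_pos : 0 < ρ₁ := hρ₁.1.lt_of_ne (left_ne_zero_of_mul hpos.ne').symm
  refine ⟨?_, fun θ => ?_, ?_, ?_⟩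
  · rw [ge_iff_le, le_div_iff₀ (by positivity), one_mul]
    exact four_mul_mul_le_add_mul_one_add_mul hρ₁.1 hρ₂.1
  · exact symmEWCDensity.sin_eq_zero_of_deriv_eq_zero hρ₁_pos (habs ρ₁ hρ₁) hρ₂.1 (habs ρ₂ hρ₂)
  · exact symmEWCDensity.monotoneOn hρ₁.1 (habs ρ₁ hρ₁) hρ₂.1 (habs ρ₂ hρ₂)
  · exact symmEWCDensity.antitoneOn hρ₁.1 (habs ρ₁ hρ₁) hρ₂.1 (habs ρ₂ hρ₂)
end
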